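/- Let π₀, …, π_T be policies with occupancy measures μ_{π_t} and let α ∈ Δ_{{0,…,T}}. Define μ̄ = ∑_t α(t) μ_{π_t} with state marginal ρ̄, and the stationary policy π̄(a|s) = μ̄(s,a)/ρ̄(s) for ρ̄(s) > 0. Then the occupancy measure of π̄ equals μ̄; in particular the stationary policy π̄ induces the same state occupancy measure as the non-stationary mixture of the π_t with weights α. -/

import Mathlib

noncomputable section
open scoped BigOperators

def IsDist {X : Type*} [Fintype X] (p : X → ℝ) : Prop :=
  (∀ x, 0 ≤ p x) ∧ ∑ x, p x = 1

def IsPolicy {S A : Type*} [Fintype A] (π : S → A → ℝ) : Prop :=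
  ∀ s, IsDist (π s)

def IsKernel {S A : Type*} [Fintype S] (P : S → A → S → ℝ) : Prop :=
  ∀ s a, IsDist (P s a)

/-- Probability of (S_t = s, A_t = a) under policy `π`, kernel `P`, initial law `ρ0`. -/
def saDist {S A : Type*} [Fintype S] [Fintype A] (P : S → A → S → ℝ) (π : S → A → ℝ)
    (ρ0 : S → ℝ) : ℕ → S → A → ℝ
  | 0 => fun s a => ρ0 s * π s a
  | (t + 1) => fun s a => π s a * ∑ s' : S, ∑ a' : A, P s' a' s * saDist P π ρ0 t s' a'

/-- Discounted state-action occupancy measure of policy `π`. -/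
def occ {S A : Type*} [Fintype S] [Fintype A] (γ : ℝ) (P : S → A → S → ℝ)
    (π : S → A → ℝ) (ρ0 : S → ℝ) (s : S) (a : A) : ℝ :=
  (1 - γ) * ∑' t : ℕ, γ ^ t * saDist P π ρ0 t s a

/-- The Bellman flow constraint set `M`. -/
def InFlow {S A : Type*} [Fintype S] [Fintype A] (γ : ℝ) (P : S → A → S → ℝ)
    (ρ0 : S → ℝ) (μ : S → A → ℝ) : Prop :=
  IsDist (fun p : S × A => μ p.1 p.2) ∧
  ∀ s, ∑ a, μ s a = (1 - γ) * ρ0 s + γ * ∑ s' : S, ∑ a' : A, P s' a' s * μ s' a'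

/-!
The occupancy measure of a stationary policy `π` is a fixed point of
`μ = (1 - γ) • (ρ0 ⊗ π) + γ • T_π μ`, where `T_π = transfer P π` is the one-step transition
operator on state–action measures. Since `T_π` does not increase the `ℓ¹` norm and `|γ| < 1`, this fixed
point is unique. Occupancy measures lie in the Bellman flow polytope `M`, which is convex, so
`μ̄ ∈ M`. Finally, an element of `M` is a fixed point for its induced policy `π̄`: where the
state marginal vanishes, so does `μ̄(s, ·)`, and elsewhere `μ̄(s, a) = π̄(a|s) ρ̄(s)`.
-/

open Finset

section Occupancy

variable {S A : Type*} [Fintype S] [Fintype A] {P : S → A → S → ℝ} {π : S → A → ℝ}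
  {ρ0 : S → ℝ} {γ : ℝ}

variable (P) in
def inflow : (S → A → ℝ) →ₗ[ℝ] S → ℝ where
  toFun μ s := ∑ s', ∑ a', P s' a' s * μ s' a'
  map_add' μ ν := by ext s; simp [mul_add, sum_add_distrib]
  map_smul' c μ := by ext s; simp [mul_sum, mul_left_comm]

variable (P π) in
def transfer : (S → A → ℝ) →ₗ[ℝ] S → A → ℝ where
  toFun μ s a := π s a * inflow P μ s
  map_add' μ ν := by ext s a; simp [mul_add]
  map_smul' c μ := by ext s a; simp [mul_left_comm]

theorem inflow_apply (μ : S → A → ℝ) (s : S) :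
    inflow P μ s = ∑ s', ∑ a', P s' a' s * μ s' a' := rfl

theorem transfer_apply (μ : S → A → ℝ) (s : S) (a : A) :
    transfer P π μ s a = π s a * inflow P μ s := rfl

theorem sum_inflow (hP : IsKernel P) (μ : S → A → ℝ) :
    ∑ s, inflow P μ s = ∑ s, ∑ a, μ s a := by
  simp only [inflow_apply]
  rw [sum_comm]
  refine sum_congr rfl fun s' _ => ?_
  rw [sum_comm]
  refine sum_congr rfl fun a' _ => ?_
  rw [← sum_mul, (hP s' a').2, one_mul]

theorem abs_inflow_le (hP : IsKernel P) (μ : S → A → ℝ) (s : S) :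
    |inflow P μ s| ≤ inflow P (fun s a => |μ s a|) s := by
  simp only [inflow_apply]
  refine (abs_sum_le_sum_abs _ _).trans (sum_le_sum fun s' _ => ?_)
  refine (abs_sum_le_sum_abs _ _).trans (le_of_eq (sum_congr rfl fun a' _ => ?_))
  rw [abs_mul, abs_of_nonneg ((hP s' a').1 s)]

theorem sum_transfer (hπ : IsPolicy π) (μ : S → A → ℝ) (s : S) :
    ∑ a, transfer P π μ s a = inflow P μ s := by
  simp only [transfer_apply, ← sum_mul, (hπ s).2, one_mul]

theorem sum_abs_transfer_le (hP : IsKernel P) (hπ : IsPolicy π) (μ : S → A → ℝ) :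
    ∑ s, ∑ a, |transfer P π μ s a| ≤ ∑ s, ∑ a, |μ s a| :=
  calc ∑ s, ∑ a, |transfer P π μ s a| = ∑ s, |inflow P μ s| := by
        refine sum_congr rfl fun s _ => ?_
        simp only [transfer_apply, abs_mul, abs_of_nonneg ((hπ s).1 _), ← sum_mul, (hπ s).2,
          one_mul]
    _ ≤ ∑ s, inflow P (fun s a => |μ s a|) s := sum_le_sum fun s _ => abs_inflow_le hP μ s
    _ = ∑ s, ∑ a, |μ s a| := sum_inflow hP _

theorem eq_zero_of_eq_smul_transfer (hP : IsKernel P) (hπ : IsPolicy π) (hγ : |γ| < 1)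
    {ν : S → A → ℝ} (hν : ν = γ • transfer P π ν) : ν = 0 := by
  have hL : ∑ s, ∑ a, |ν s a| ≤ |γ| * ∑ s, ∑ a, |ν s a| :=
    calc ∑ s, ∑ a, |ν s a| = |γ| * ∑ s, ∑ a, |transfer P π ν s a| := by
          conv_lhs => rw [hν]
          simp [abs_mul, mul_sum]
      _ ≤ |γ| * ∑ s, ∑ a, |ν s a| :=
          mul_le_mul_of_nonneg_left (sum_abs_transfer_le hP hπ ν) (abs_nonneg γ)
  have hL0 : ∑ s, ∑ a, |ν s a| = 0 := by
    have : 0 ≤ ∑ s, ∑ a, |ν s a| := by positivity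
    nlinarith
  ext s a
  have hs := (sum_eq_zero_iff_of_nonneg fun s _ => by positivity).1 hL0 s (mem_univ s)
  exact abs_eq_zero.1 ((sum_eq_zero_iff_of_nonneg fun a _ => abs_nonneg _).1 hs a (mem_univ a))

theorem saDist_succ (t : ℕ) : saDist P π ρ0 (t + 1) = transfer P π (saDist P π ρ0 t) := rfl

theorem saDist_nonneg (hP : IsKernel P) (hπ : IsPolicy π) (hρ0 : ∀ s, 0 ≤ ρ0 s) (t : ℕ)
    (s : S) (a : A) : 0 ≤ saDist P π ρ0 t s a := by
  induction t generalizing s a with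
  | zero => exact mul_nonneg (hρ0 s) ((hπ s).1 a)
  | succ t ih =>
    exact mul_nonneg ((hπ s).1 a) (sum_nonneg fun s' _ =>
      sum_nonneg fun a' _ => mul_nonneg ((hP s' a').1 s) (ih s' a'))

theorem abs_le_sum_sum_abs (f : S → A → ℝ) (s : S) (a : A) :
    |f s a| ≤ ∑ s, ∑ a, |f s a| :=
  (single_le_sum (f := fun a => |f s a|) (fun _ _ => abs_nonneg _) (mem_univ a)).trans
    (single_le_sum (f := fun s => ∑ a, |f s a|) (fun _ _ => by positivity) (mem_univ s))

theorem sum_abs_saDist_le (hP : IsKernel P) (hπ : IsPolicy π) (t : ℕ) :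
    ∑ s, ∑ a, |saDist P π ρ0 t s a| ≤ ∑ s, ∑ a, |saDist P π ρ0 0 s a| := by
  induction t with
  | zero => exact le_rfl
  | succ t ih => exact (sum_abs_transfer_le hP hπ _).trans ih

theorem summable_pow_smul_saDist (hP : IsKernel P) (hπ : IsPolicy π) (hγ : |γ| < 1) :
    Summable fun t => γ ^ t • saDist P π ρ0 t := by
  refine Pi.summable.2 fun s => Pi.summable.2 fun a => ?_
  refine Summable.of_norm_bounded ((summable_geometric_of_lt_one (abs_nonneg γ) hγ).mul_right
    (∑ s, ∑ a, |saDist P π ρ0 0 s a|)) fun t => ?_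
  simp only [Pi.smul_apply, smul_eq_mul, Real.norm_eq_abs, abs_mul, abs_pow]
  exact mul_le_mul_of_nonneg_left ((abs_le_sum_sum_abs _ s a).trans (sum_abs_saDist_le hP hπ t))
    (by positivity)

theorem occ_eq_add_smul_transfer (hP : IsKernel P) (hπ : IsPolicy π) (hγ : |γ| < 1) :
    occ γ P π ρ0 = (1 - γ) • saDist P π ρ0 0 + γ • transfer P π (occ γ P π ρ0) := by
  set F : ℕ → S → A → ℝ := fun t => γ ^ t • saDist P π ρ0 t
  have hF : Summable F := summable_pow_smul_saDist hP hπ hγ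
  have hocc : occ γ P π ρ0 = (1 - γ) • ∑' t, F t := by
    ext s a
    rw [Pi.smul_apply, Pi.smul_apply, tsum_apply hF, tsum_apply (Pi.summable.1 hF s)]
    rfl
  have hshift : ∑' t, F (t + 1) = γ • transfer P π (∑' t, F t) := by
    have hF_succ : ∀ t, F (t + 1) = γ • transfer P π (F t) := fun t => by
      simp only [F, saDist_succ, map_smul, smul_smul, pow_succ, mul_comm]
    have hmap := (γ • transfer P π).toContinuousLinearMap.map_tsum hF
    simp only [LinearMap.coe_toContinuousLinearMap', LinearMap.smul_apply] at hmap
    simp only [hF_succ, hmap]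
  calc occ γ P π ρ0 = (1 - γ) • ∑' t, F t := hocc
    _ = (1 - γ) • (F 0 + γ • transfer P π (∑' t, F t)) := by
      conv_lhs => rw [hF.tsum_eq_zero_add, hshift]
    _ = (1 - γ) • saDist P π ρ0 0 + γ • transfer P π (occ γ P π ρ0) := by
      rw [hocc, map_smul, smul_add, smul_comm γ (1 - γ)]
      simp only [F, pow_zero, one_smul]

theorem sum_occ_eq (hP : IsKernel P) (hπ : IsPolicy π) (hγ : |γ| < 1) (s : S) :
    ∑ a, occ γ P π ρ0 s a = (1 - γ) * ρ0 s + γ * inflow P (occ γ P π ρ0) s := by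
  conv_lhs => rw [occ_eq_add_smul_transfer hP hπ hγ]
  simp only [Pi.add_apply, Pi.smul_apply, smul_eq_mul, sum_add_distrib, ← mul_sum,
    sum_transfer hπ, saDist, (hπ s).2, mul_one]

theorem occ_nonneg (hP : IsKernel P) (hπ : IsPolicy π) (hρ0 : ∀ s, 0 ≤ ρ0 s)
    (hγ0 : 0 ≤ γ) (hγ1 : γ ≤ 1) (s : S) (a : A) : 0 ≤ occ γ P π ρ0 s a :=
  mul_nonneg (sub_nonneg.2 hγ1) (tsum_nonneg fun t =>
    mul_nonneg (pow_nonneg hγ0 t) (saDist_nonneg hP hπ hρ0 t s a))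

theorem inFlow_occ (hP : IsKernel P) (hπ : IsPolicy π) (hρ0 : IsDist ρ0) (hγ0 : 0 ≤ γ)
    (hγ1 : γ < 1) : InFlow γ P ρ0 (occ γ P π ρ0) := by
  have hflow := sum_occ_eq hP hπ (abs_lt.2 ⟨by linarith, hγ1⟩) (ρ0 := ρ0)
  have hmass :
      ∑ s, ∑ a, occ γ P π ρ0 s a = (1 - γ) + γ * ∑ s, ∑ a, occ γ P π ρ0 s a :=
    calc ∑ s, ∑ a, occ γ P π ρ0 s a
        = ∑ s, ((1 - γ) * ρ0 s + γ * inflow P (occ γ P π ρ0) s) :=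
          sum_congr rfl fun s _ => hflow s
      _ = (1 - γ) + γ * ∑ s, ∑ a, occ γ P π ρ0 s a := by
          rw [sum_add_distrib, ← mul_sum, ← mul_sum, hρ0.2, mul_one, sum_inflow hP]
  refine ⟨⟨fun p => occ_nonneg hP hπ hρ0.1 hγ0 hγ1.le p.1 p.2, ?_⟩, hflow⟩
  rw [Fintype.sum_prod_type]
  exact mul_left_cancel₀ (sub_pos.2 hγ1).ne' (by linarith)

theorem convex_setOf_inFlow : Convex ℝ {μ : S → A → ℝ | InFlow γ P ρ0 μ} := by
  intro μ hμ ν hν a b ha hb hab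
  simp only [Set.mem_ofPred_eq, InFlow, IsDist, Pi.add_apply, Pi.smul_apply, smul_eq_mul]
  refine ⟨⟨fun p => add_nonneg (mul_nonneg ha (hμ.1.1 p)) (mul_nonneg hb (hν.1.1 p)), ?_⟩,
    fun s => ?_⟩
  · rw [sum_add_distrib, ← mul_sum, ← mul_sum, hμ.1.2, hν.1.2, mul_one, mul_one, hab]
  · simp only [sum_add_distrib, ← mul_sum, hμ.2 s, hν.2 s, mul_add, mul_left_comm _ a,
      mul_left_comm _ b]
    linear_combination (1 - γ) * ρ0 s * hab

theorem eq_add_smul_transfer_of_flow {μ : S → A → ℝ} (hμ : ∀ s a, 0 ≤ μ s a)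
    (hflow : ∀ s, ∑ a, μ s a = (1 - γ) * ρ0 s + γ * inflow P μ s)
    (hπμ : ∀ s a, ∑ a', μ s a' ≠ 0 → π s a = μ s a / ∑ a', μ s a') :
    μ = (1 - γ) • saDist P π ρ0 0 + γ • transfer P π μ := by
  ext s a
  have hμπ : μ s a = π s a * ∑ a', μ s a' := by
    by_cases h : ∑ a', μ s a' = 0
    · rw [h, mul_zero]
      exact (sum_eq_zero_iff_of_nonneg fun a _ => hμ s a).1 h a (mem_univ a)
    · rw [hπμ s a h, div_mul_cancel₀ _ h]
  rw [hμπ, hflow]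
  simp only [Pi.add_apply, Pi.smul_apply, smul_eq_mul, transfer_apply, saDist]
  ring

theorem occ_eq_of_inFlow (hP : IsKernel P) (hπ : IsPolicy π) (hγ : |γ| < 1)
    {μ : S → A → ℝ} (hμ : InFlow γ P ρ0 μ)
    (hπμ : ∀ s a, ∑ a', μ s a' ≠ 0 → π s a = μ s a / ∑ a', μ s a') :
    occ γ P π ρ0 = μ := by
  have hdiff : occ γ P π ρ0 - μ = γ • transfer P π (occ γ P π ρ0 - μ) := by
    conv_lhs => rw [occ_eq_add_smul_transfer hP hπ hγ, eq_add_smul_transfer_of_flow (μ := μ)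
      (fun s a => hμ.1.1 (s, a)) hμ.2 hπμ]
    rw [map_sub, smul_sub]
    abel
  exact sub_eq_zero.1 (eq_zero_of_eq_smul_transfer hP hπ hγ hdiff)

end Occupancy

theorem stmt18_general {S A : Type*} [Fintype S] [Fintype A]
    (γ : ℝ) (hγ : γ ∈ Set.Ioo (0 : ℝ) 1)
    (P : S → A → S → ℝ) (hP : IsKernel P)
    (ρ0 : S → ℝ) (hρ0 : IsDist ρ0)
    (T : ℕ) (π : Fin (T + 1) → S → A → ℝ) (hπ : ∀ t, IsPolicy (π t))
    (α : Fin (T + 1) → ℝ) (hα : IsDist α)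
    (πbar : S → A → ℝ) (hπbar : IsPolicy πbar)
    (hcond : ∀ s a, (∑ a' : A, ∑ t, α t * occ γ P (π t) ρ0 s a') ≠ 0 →
      πbar s a = (∑ t, α t * occ γ P (π t) ρ0 s a)
        / ∑ a' : A, ∑ t, α t * occ γ P (π t) ρ0 s a') :
    ∀ s a, occ γ P πbar ρ0 s a = ∑ t, α t * occ γ P (π t) ρ0 s a := by
  have hγ' : |γ| < 1 := abs_lt.2 ⟨by linarith [hγ.1], hγ.2⟩
  set μ := ∑ t, α t • occ γ P (π t) ρ0
  have hμ : ∀ s a, μ s a = ∑ t, α t * occ γ P (π t) ρ0 s a := fun s a => by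
    simp only [μ, Finset.sum_apply, Pi.smul_apply, smul_eq_mul]
  simp only [← hμ] at hcond ⊢
  have hμ_mem : μ ∈ {μ | InFlow γ P ρ0 μ} :=
    convex_setOf_inFlow.sum_mem (fun t _ => hα.1 t) hα.2 fun t _ =>
      inFlow_occ hP (hπ t) hρ0 hγ.1.le hγ.2
  have hocc := occ_eq_of_inFlow hP hπbar hγ' hμ_mem hcond
  exact fun s a => congrFun (congrFun hocc s) a

/-- Let `μ̄ = ∑_t α(t) μ_{π_t}` be a convex combination of occupancy measures,
with state marginal `ρ̄`, and let `π̄(a|s) = μ̄(s,a)/ρ̄(s)` whenever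
`ρ̄(s) > 0`. Then the occupancy measure of the stationary policy `π̄` equals
`μ̄`; in particular `π̄` induces the same state occupancy measure as the
non-stationary mixture of the `π_t` with weights `α`. -/
theorem stmt18 {S A : Type*} [Fintype S] [Fintype A] [Nonempty S] [Nonempty A]
    (γ : ℝ) (hγ : γ ∈ Set.Ioo (0 : ℝ) 1)
    (P : S → A → S → ℝ) (hP : IsKernel P)
    (ρ0 : S → ℝ) (hρ0 : IsDist ρ0)
    (T : ℕ) (π : Fin (T + 1) → S → A → ℝ) (hπ : ∀ t, IsPolicy (π t))
    (α : Fin (T + 1) → ℝ) (hα : IsDist α)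
    (πbar : S → A → ℝ) (hπbar : IsPolicy πbar)
    (hcond : ∀ s a, (∑ a' : A, ∑ t, α t * occ γ P (π t) ρ0 s a') ≠ 0 →
      πbar s a = (∑ t, α t * occ γ P (π t) ρ0 s a)
        / ∑ a' : A, ∑ t, α t * occ γ P (π t) ρ0 s a') :
    ∀ s a, occ γ P πbar ρ0 s a = ∑ t, α t * occ γ P (π t) ρ0 s a :=
  stmt18_general γ hγ P hP ρ0 hρ0 T π hπ α hα πbar hπbar hcond
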